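/- Assume the Common Givens: P_i is a preference order on C consistent with Q; the query is the pair (c_j,c_k) with P_i(c_j,c_k); and neither (c_j,c_k) nor (c_k,c_j) belongs to Q. For every P' ∈ μ(P_i) there exists a candidate z ∈ [c_j, P_i, c_k] such that P' is exactly the following preference order, listed from most to least preferred: first the candidates of X_good = (∞, P_i, z) \ [c_j, Q, −∞] in the relative order of P_i; then the candidates of Y_bad = [z, P_i, −∞] ∩ (∞, Q, c_k) in the relative order of P_i; then c_k; then c_j; then the candidates of X_bad = (∞, P_i, z) ∩ (c_j, Q, −∞) in the relative order of P_i; and finally the candidates of Y_good = [z, P_i, −∞] \ [∞, Q, c_k] in the relative order of P_i. Here (∞, P_i, z) is the set of candidates strictly above z in P_i, [z, P_i, −∞] is z together with all candidates below z in P_i, (c_j, Q, −∞) is the set of candidates c' with (c_j,c') ∈ Q, [c_j, Q, −∞] is c_j together with that set, (∞, Q, c_k) is the set of candidates c' with (c',c_k) ∈ Q, and [∞, Q, c_k] is c_k together with that set. -/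

import Mathlib

/-!
Cut `P'` just below `ck`. Sorting each side of the cut by `Pi` gives a feasible order whose
inversions against `Pi` are among those of `P'`, so by minimality `P'` is that order: the
candidates above the cut in `Pi` order, then those below it in `Pi` order. Doing the same with
the cut just above `cj` shows that nothing lies between `ck` and `cj`, so a candidate `Pi`-above
`cj` stays above the cut and one `Pi`-below `ck` stays below it; a candidate `Q`-above `ck` or
`Q`-below `cj` is placed by feasibility. For the remaining free candidates strictly between `cj`
and `ck`, those above the cut all `Pi`-precede those below it: otherwise exchanging the
`Pi`-first free candidate below the cut with the `Pi`-last free one above it keeps the order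
feasible and strictly decreases the swap distance. The pivot `z` is the `Pi`-first free candidate
below the cut (or `ck` if there is none), and the six blocks are the two sides of the
cut split at `z`.
-/

/-- A preference order: a strict total order on candidates. -/
def IsPref {C : Type*} (P : C → C → Prop) : Prop :=
  (∀ a b : C, a ≠ b → P a b ∨ P b a) ∧ (∀ a : C, ¬ P a a) ∧
    ∀ a b c : C, P a b → P b c → P a c

/-- The (closed) segment `[c, P, c']` of candidates between `c` and `c'`. -/
def seg {C : Type*} (P : C → C → Prop) (c c' : C) : Set C :=
  {d : C | (d = c ∨ P c d) ∧ (d = c' ∨ P d c')}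

/-- `Q` is a strict partial order (consistent, transitively closed reported preferences). -/
def IsSPO {C : Type*} (Q : C → C → Prop) : Prop :=
  (∀ a : C, ¬ Q a a) ∧ ∀ a b c : C, Q a b → Q b c → Q a c

/-- `P` is consistent with (extends) the reported preferences `Q`, written `P ⊨ Q`. -/
def Extends {C : Type*} (P Q : C → C → Prop) : Prop := ∀ a b : C, Q a b → P a b

/-- The swap distance between two preference orders: the number of (unordered) pairs of
candidates ordered differently, counted here as ordered pairs `(a, b)` with
`P a b` and `P' b a`. -/
noncomputable def dswap {C : Type*} [Fintype C] (P P' : C → C → Prop) : ℕ :=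
  Set.ncard {p : C × C | P p.1 p.2 ∧ P' p.2 p.1}

/-- `P` is a preference order consistent with the transitive closure of `Q ∪ {(ck, cj)}`
(for a transitive total order this is the same as extending `Q` and putting `ck` above `cj`). -/
def Feasible {C : Type*} (Q : C → C → Prop) (cj ck : C) (P : C → C → Prop) : Prop :=
  IsPref P ∧ Extends P Q ∧ P ck cj

/-- `P ∈ μ(Pi)`: among all preference orders consistent with the transitive closure of
`Q ∪ {(ck, cj)}`, `P` minimizes the swap distance to `Pi`. -/
def InMu {C : Type*} [Fintype C] (Q : C → C → Prop) (cj ck : C)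
    (Pi P : C → C → Prop) : Prop :=
  Feasible Q cj ck P ∧ ∀ R : C → C → Prop, Feasible Q cj ck R → dswap Pi P ≤ dswap Pi R

open Classical in
/-- The block index of candidate `d` in the order
`(X_good, Y_bad, c_k, c_j, X_bad, Y_good)` built around the pivot `z`:
`X_good = (∞, Pi, z) \ [cj, Q, −∞]`, `Y_bad = [z, Pi, −∞] ∩ (∞, Q, ck)`,
then `ck`, then `cj`, `X_bad = (∞, Pi, z) ∩ (cj, Q, −∞)`,
`Y_good = [z, Pi, −∞] \ [∞, Q, ck]`. -/
noncomputable def blk {C : Type*} (Q Pi : C → C → Prop) (cj ck z : C) (d : C) : ℕ :=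
  if Pi d z ∧ ¬ (d = cj ∨ Q cj d) then 0
  else if (d = z ∨ Pi z d) ∧ Q d ck then 1
  else if d = ck then 2
  else if d = cj then 3
  else if Pi d z ∧ Q cj d then 4
  else if (d = z ∨ Pi z d) ∧ ¬ (d = ck ∨ Q d ck) then 5
  else 6

namespace IsPref

variable {C : Type*} {P : C → C → Prop}

theorem irrefl (h : IsPref P) (a : C) : ¬ P a a := h.2.1 a

theorem trans (h : IsPref P) {a b c : C} : P a b → P b c → P a c := h.2.2 a b c

theorem asymm (h : IsPref P) {a b : C} (hab : P a b) : ¬ P b a :=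
  fun hba => h.irrefl a (h.trans hab hba)

theorem ne (h : IsPref P) {a b : C} (hab : P a b) : a ≠ b := by
  rintro rfl
  exact h.irrefl a hab

theorem total (h : IsPref P) {a b : C} (hab : a ≠ b) : P a b ∨ P b a := h.1 a b hab

theorem rel_or_eq_or_rel (h : IsPref P) (a b : C) : P a b ∨ a = b ∨ P b a := by
  rcases eq_or_ne a b with hab | hab
  · exact Or.inr (Or.inl hab)
  · exact (h.total hab).imp_right Or.inr

theorem eq_or_rel_of_not_rel (h : IsPref P) {a b : C} (hab : ¬ P a b) : b = a ∨ P b a := by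
  rcases h.rel_or_eq_or_rel a b with h' | h' | h'
  exacts [absurd h' hab, Or.inl h'.symm, Or.inr h']

theorem swap (h : IsPref P) : IsPref (fun a b => P b a) :=
  ⟨fun _ _ hab => (h.total hab).symm, h.irrefl, fun _ _ _ hab hbc => h.trans hbc hab⟩

theorem wellFounded [Finite C] (h : IsPref P) : WellFounded P :=
  @Finite.wellFounded_of_trans_of_irrefl C _ P ⟨fun _ _ _ => h.trans⟩ ⟨h.irrefl⟩

theorem iff_of_imp {R : C → C → Prop} (hP : IsPref P) (hR : IsPref R)
    (h : ∀ a b, R a b → P a b) (a b : C) : P a b ↔ R a b := by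
  refine ⟨fun hab => ?_, h a b⟩
  exact (hR.total (hP.ne hab)).resolve_right fun hba => hP.asymm hab (h b a hba)

end IsPref

section KeyOrder

variable {C : Type*}

def keyOrder (σ : C → ℕ) (P : C → C → Prop) (a b : C) : Prop :=
  σ a < σ b ∨ (σ a = σ b ∧ P a b)

theorem IsPref.keyOrder {P : C → C → Prop} (h : IsPref P) (σ : C → ℕ) :
    IsPref (keyOrder σ P) := by
  refine ⟨fun a b hab => ?_, fun a ha => ?_, fun a b c hab hbc => ?_⟩
  · rcases lt_trichotomy (σ a) (σ b) with hσ | hσ | hσ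
    · exact Or.inl (Or.inl hσ)
    · exact (h.total hab).imp (fun h' => Or.inr ⟨hσ, h'⟩) (fun h' => Or.inr ⟨hσ.symm, h'⟩)
    · exact Or.inr (Or.inl hσ)
  · rcases ha with ha | ha
    exacts [lt_irrefl _ ha, h.irrefl a ha.2]
  · rcases hab with hab | hab <;> rcases hbc with hbc | hbc
    · exact Or.inl (hab.trans hbc)
    · exact Or.inl (hbc.1 ▸ hab)
    · exact Or.inl (hab.1 ▸ hbc)
    · exact Or.inr ⟨hab.1.trans hbc.1, h.trans hab.2 hbc.2⟩

theorem Extends.keyOrder {P Q : C → C → Prop} (h : Extends P Q) {σ : C → ℕ}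
    (hσ : ∀ a b, Q a b → σ a ≤ σ b) : Extends (keyOrder σ P) Q := fun a b hab =>
  (hσ a b hab).lt_or_eq.imp id fun hσ => ⟨hσ, h a b hab⟩

theorem keyOrder_of_refines {P : C → C → Prop} {σ τ : C → ℕ}
    (hmono : ∀ a b, τ a ≤ τ b → σ a ≤ σ b) (hsame : ∀ a b, τ a < τ b → σ a = σ b → P a b)
    {a b : C} (h : keyOrder τ P a b) : keyOrder σ P a b := by
  rcases h with hτ | ⟨hτ, hab⟩
  · rcases (hmono a b hτ.le).lt_or_eq with hσ | hσ
    exacts [Or.inl hσ, Or.inr ⟨hσ, hsame a b hτ hσ⟩]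
  · exact Or.inr ⟨le_antisymm (hmono a b hτ.le) (hmono b a hτ.ge), hab⟩

theorem indicator_one_le_of_imp {L : Set C} {a b : C} (h : a ∈ L → b ∈ L) :
    L.indicator (1 : C → ℕ) a ≤ L.indicator 1 b := by
  by_cases ha : a ∈ L
  · simp [ha, h ha]
  · simp [ha]

theorem mem_and_notMem_of_indicator_one_lt {L : Set C} {a b : C}
    (h : L.indicator (1 : C → ℕ) a < L.indicator 1 b) : a ∉ L ∧ b ∈ L := by
  by_cases ha : a ∈ L <;> by_cases hb : b ∈ L <;> simp_all

theorem mem_iff_of_indicator_one_eq {L : Set C} {a b : C}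
    (h : L.indicator (1 : C → ℕ) a = L.indicator 1 b) : a ∈ L ↔ b ∈ L := by
  by_cases ha : a ∈ L <;> by_cases hb : b ∈ L <;> simp_all

theorem rel_of_keyOrder_indicator {P : C → C → Prop} {L : Set C} {a b : C}
    (h : keyOrder (L.indicator 1) P a b) (hab : a ∈ L ↔ b ∈ L) : P a b := by
  rcases h with hlt | ⟨-, h⟩
  · have := mem_and_notMem_of_indicator_one_lt hlt
    tauto
  · exact h

end KeyOrder

section SwapDistance

variable {C : Type*} [Fintype C] {Pi : C → C → Prop}

theorem IsPref.iff_of_inversions_subset {P R : C → C → Prop} (hPi : IsPref Pi) (hP : IsPref P)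
    (hR : IsPref R) (hsub : ∀ a b, Pi a b → R b a → P b a) (hle : dswap Pi P ≤ dswap Pi R) :
    ∀ a b, P a b ↔ R a b := by
  have heq : {p : C × C | Pi p.1 p.2 ∧ R p.2 p.1} = {p | Pi p.1 p.2 ∧ P p.2 p.1} :=
    Set.eq_of_subset_of_ncard_le (fun p hp => ⟨hp.1, hsub _ _ hp.1 hp.2⟩) hle
  refine hP.iff_of_imp hR fun a b hab => ?_
  rcases hPi.total (hR.ne hab) with h | h
  · by_contra hn
    have hinv : (a, b) ∈ {p : C × C | Pi p.1 p.2 ∧ P p.2 p.1} :=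
      ⟨h, (hP.total (hR.ne hab)).resolve_left hn⟩
    rw [← heq] at hinv
    exact hR.asymm hab hinv.2
  · exact hsub b a h hab

theorem dswap_keyOrder (hPi : IsPref Pi) (σ : C → ℕ) :
    dswap Pi (keyOrder σ Pi) = {p : C × C | Pi p.1 p.2 ∧ σ p.2 < σ p.1}.ncard := by
  unfold dswap keyOrder
  congr 1
  ext p
  exact and_congr_right fun h => or_iff_left fun h' => hPi.asymm h h'.2

theorem dswap_keyOrder_comp_swap_lt [DecidableEq C] (hPi : IsPref Pi) {σ : C → ℕ} {d₁ d₂ : C}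
    (h₁₂ : Pi d₁ d₂) (hσ : σ d₂ < σ d₁) (hmin : ∀ x, σ d₂ ≤ σ x) (hmax : ∀ x, σ x ≤ σ d₁) :
    dswap Pi (keyOrder (σ ∘ Equiv.swap d₁ d₂) Pi) < dswap Pi (keyOrder σ Pi) := by
  set s := Equiv.swap d₁ d₂
  set inv := {p : C × C | Pi p.1 p.2 ∧ σ p.2 < σ p.1}
  rw [dswap_keyOrder hPi, dswap_keyOrder hPi]
  -- Since `d₁` has the largest and `d₂` the smallest key, transposing both coordinates sends
  -- each inversion of the new order to an inversion of the old one other than `(d₁, d₂)`.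
  have hmaps : ∀ p ∈ {p : C × C | Pi p.1 p.2 ∧ (σ ∘ s) p.2 < (σ ∘ s) p.1},
      s.prodCongr s p ∈ inv \ {(d₁, d₂)} := by
    rintro ⟨x, y⟩ ⟨hxy, hlt⟩
    simp only [Function.comp_apply] at hlt
    have hx : x ≠ d₁ := by
      rintro rfl
      rw [Equiv.swap_apply_left] at hlt
      exact (hmin _).not_gt hlt
    have hy : y ≠ d₂ := by
      rintro rfl
      rw [Equiv.swap_apply_right] at hlt
      exact (hmax _).not_gt hlt
    simp only [Equiv.prodCongr_apply, Prod.map, Set.mem_sdiff, Set.mem_singleton_iff,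
      Prod.ext_iff, not_and]
    refine ⟨⟨?_, hlt⟩, fun hsx hsy => ?_⟩
    · rcases eq_or_ne x d₂ with rfl | hx₂ <;> rcases eq_or_ne y d₁ with rfl | hy₁
      · exact absurd hxy (hPi.asymm h₁₂)
      · simpa [s, Equiv.swap_apply_of_ne_of_ne hy₁ hy] using hPi.trans h₁₂ hxy
      · simpa [s, Equiv.swap_apply_of_ne_of_ne hx hx₂] using hPi.trans hxy h₁₂
      · simpa [s, Equiv.swap_apply_of_ne_of_ne hx hx₂, Equiv.swap_apply_of_ne_of_ne hy₁ hy]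
    · rw [Equiv.swap_apply_eq_iff, Equiv.swap_apply_left] at hsx
      rw [Equiv.swap_apply_eq_iff, Equiv.swap_apply_right] at hsy
      subst hsx hsy
      exact hPi.asymm h₁₂ hxy
  calc _ ≤ (inv \ {(d₁, d₂)}).ncard :=
        Set.ncard_le_ncard_of_injOn _ hmaps (s.prodCongr s).injective.injOn
    _ < inv.ncard := Set.ncard_sdiff_singleton_lt_of_mem ⟨h₁₂, hσ⟩

end SwapDistance

section Blocks

variable {C : Type*} {Q Pi : C → C → Prop} {cj ck z : C}

theorem blk_le_two_iff {d : C} :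
    blk Q Pi cj ck z d ≤ 2 ↔
      (Pi d z ∧ ¬ (d = cj ∨ Q cj d)) ∨ ((d = z ∨ Pi z d) ∧ Q d ck) ∨ d = ck := by
  unfold blk
  split_ifs <;> simp_all

theorem blk_cases (hPi : IsPref Pi) (d : C) :
    (blk Q Pi cj ck z d = 0 ∧ Pi d z) ∨
    (blk Q Pi cj ck z d = 1 ∧ (d = z ∨ Pi z d) ∧ Q d ck) ∨
    (blk Q Pi cj ck z d = 2 ∧ d = ck) ∨
    (blk Q Pi cj ck z d = 3 ∧ d = cj) ∨
    (blk Q Pi cj ck z d = 4 ∧ Pi d z ∧ Q cj d) ∨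
    (blk Q Pi cj ck z d = 5 ∧ (d = z ∨ Pi z d) ∧ d ≠ cj) := by
  unfold blk
  split_ifs with h₀ h₁ h₂ h₃ h₄ h₅
  · exact Or.inl ⟨rfl, h₀.1⟩
  · exact Or.inr (Or.inl ⟨rfl, h₁⟩)
  · exact Or.inr (Or.inr (Or.inl ⟨rfl, h₂⟩))
  · exact Or.inr (Or.inr (Or.inr (Or.inl ⟨rfl, h₃⟩)))
  · exact Or.inr (Or.inr (Or.inr (Or.inr (Or.inl ⟨rfl, h₄⟩))))
  · exact Or.inr (Or.inr (Or.inr (Or.inr (Or.inr ⟨rfl, h₅.1, h₃⟩))))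
  · exfalso
    rcases hPi.rel_or_eq_or_rel d z with hdz | hdz | hdz
    · by_cases hj : Q cj d
      exacts [h₄ ⟨hdz, hj⟩, h₀ ⟨hdz, by tauto⟩]
    all_goals
      by_cases hk : Q d ck
      exacts [h₁ ⟨by tauto, hk⟩, h₅ ⟨by tauto, by tauto⟩]

theorem keyOrder_indicator_of_keyOrder_blk (hPi : IsPref Pi) (hPiQ : Extends Pi Q)
    (hz : z ∈ seg Pi cj ck) {a b : C} (h : keyOrder (blk Q Pi cj ck z) Pi a b) :
    keyOrder ({d | 2 < blk Q Pi cj ck z d}.indicator 1) Pi a b := by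
  refine keyOrder_of_refines (fun a b hab => indicator_one_le_of_imp (hab.trans_lt' ·))
    (fun a b hab hσ => ?_) h
  have hside : 2 < blk Q Pi cj ck z b → 2 < blk Q Pi cj ck z a :=
    (mem_iff_of_indicator_one_eq hσ).2
  obtain ⟨hzj, hzk⟩ := hz
  have hcases := blk_cases (Q := Q) (cj := cj) (ck := ck) (z := z) hPi
  rcases hcases a with ⟨ha, ha'⟩ | ⟨ha, ha'⟩ | ⟨ha, ha'⟩ | ⟨ha, ha'⟩ | ⟨ha, ha'⟩ | ⟨ha, ha'⟩ <;>
  rcases hcases b with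
    ⟨hb, hb'⟩ | ⟨hb, hb'⟩ | ⟨hb, hb'⟩ | ⟨hb, hb'⟩ | ⟨hb, hb'⟩ | ⟨hb, hb'⟩ <;>
  rw [ha, hb] at hab hside <;> try omega
  · rcases hb'.1 with rfl | hzb
    exacts [ha', hPi.trans ha' hzb]
  · subst hb'
    rcases hzk with rfl | hzk
    exacts [ha', hPi.trans ha' hzk]
  · exact hb' ▸ hPiQ a ck ha'.2
  · exact ha' ▸ hPiQ cj b hb'.2
  · subst ha'
    rcases hb'.1 with rfl | hzb
    · exact hzj.resolve_left hb'.2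
    · rcases hzj with rfl | hjz
      exacts [hzb, hPi.trans hjz hzb]
  · rcases hb' with rfl | hzb
    exacts [ha'.1, hPi.trans ha'.1 hzb]

def freeBetween (Q Pi : C → C → Prop) (cj ck : C) : Set C :=
  {d | Pi cj d ∧ Pi d ck ∧ ¬ Q cj d ∧ ¬ Q d ck}

theorem mem_iff_blk_le_two (hPi : IsPref Pi) (hPiQ : Extends Pi Q) (hz : z ∈ seg Pi cj ck)
    {U : Set C} (hk : ck ∈ U) (hj : cj ∉ U) (habove : ∀ d, Pi d cj → d ∈ U)
    (hbelow : ∀ d, Pi ck d → d ∉ U) (hQk : ∀ d, Q d ck → d ∈ U) (hQj : ∀ d, Q cj d → d ∉ U)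
    (hfree : ∀ d ∈ freeBetween Q Pi cj ck, d ∈ U ↔ Pi d z) (d : C) :
    d ∈ U ↔ blk Q Pi cj ck z d ≤ 2 := by
  rw [blk_le_two_iff]
  obtain ⟨hzj, hzk⟩ := hz
  rcases eq_or_ne d ck with rfl | hdk
  · simp [hk]
  rcases eq_or_ne d cj with rfl | hdj
  · have hQjk : ¬ Q d ck := fun h => hQj ck h hk
    simp [hj, hQjk, hdk]
  rcases hPi.rel_or_eq_or_rel d cj with hdj' | hdj' | hjd
  · have hdz : Pi d z := by
      rcases hzj with rfl | hjz
      exacts [hdj', hPi.trans hdj' hjz]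
    have hQjd : ¬ Q cj d := fun h => hPi.asymm hdj' (hPiQ cj d h)
    simp [habove d hdj', hdz, hdj, hQjd]
  · exact absurd hdj' hdj
  rcases hPi.rel_or_eq_or_rel d ck with hdk' | hdk' | hkd
  · by_cases hQdk : Q d ck
    · have hQjd : ¬ Q cj d := fun h => hQj d h (hQk d hQdk)
      simp only [hQk d hQdk, hQdk, hQjd, hdj, hdk, true_iff]
      rcases hPi.rel_or_eq_or_rel d z with h | h | h <;> tauto
    by_cases hQjd : Q cj d
    · simp [hQj d hQjd, hQjd, hQdk, hdk]
    · simp [hfree d ⟨hjd, hdk', hQjd, hQdk⟩, hQjd, hQdk, hdj, hdk]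
  · exact absurd hdk' hdk
  · have hdz : ¬ Pi d z := fun h => by
      rcases hzk with rfl | hzk
      exacts [hPi.asymm hkd h, hPi.asymm hkd (hPi.trans h hzk)]
    have hzd : d ≠ z := by
      rintro rfl
      exact hzk.elim hdk (hPi.asymm hkd)
    have hQdk : ¬ Q d ck := fun h => hPi.asymm hkd (hPiQ d ck h)
    simp [hbelow d hkd, hdz, hzd, hQdk, hdk]

end Blocks

namespace InMu

variable {C : Type*} [Fintype C] {Q Pi P' : C → C → Prop} {cj ck : C}

theorem isPref (hmu : InMu Q cj ck Pi P') : IsPref P' := hmu.1.1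

theorem rel_of_rel (hmu : InMu Q cj ck Pi P') {a b : C} (h : Q a b) : P' a b := hmu.1.2.1 a b h

theorem rel_ck_cj (hmu : InMu Q cj ck Pi P') : P' ck cj := hmu.1.2.2

theorem dswap_le (hmu : InMu Q cj ck Pi P') {R : C → C → Prop} (hR : Feasible Q cj ck R) :
    dswap Pi P' ≤ dswap Pi R := hmu.2 R hR

theorem iff_keyOrder_indicator (hPi : IsPref Pi) (hPiQ : Extends Pi Q)
    (hmu : InMu Q cj ck Pi P') {L : Set C} (hL : ∀ x y, x ∈ L → P' x y → y ∈ L)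
    (hj : cj ∈ L) (hk : ck ∉ L) (a b : C) : P' a b ↔ keyOrder (L.indicator 1) Pi a b := by
  have hR : Feasible Q cj ck (keyOrder (L.indicator 1) Pi) :=
    ⟨hPi.keyOrder _, hPiQ.keyOrder fun a b hab =>
      indicator_one_le_of_imp fun ha => hL a b ha (hmu.rel_of_rel hab), Or.inl (by simp [hj, hk])⟩
  refine hPi.iff_of_inversions_subset hmu.isPref hR.1 (fun a b hab hba => ?_) (hmu.dswap_le hR) a b
  rcases hba with hlt | ⟨-, hba⟩
  · obtain ⟨hb, ha⟩ := mem_and_notMem_of_indicator_one_lt hlt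
    exact (hmu.isPref.total (ne_of_mem_of_not_mem ha hb)).resolve_left
      fun hab' => hb (hL a b ha hab')
  · exact absurd hba (hPi.asymm hab)

theorem iff_keyOrder_cut_ck (hPi : IsPref Pi) (hPiQ : Extends Pi Q)
    (hmu : InMu Q cj ck Pi P') (a b : C) :
    P' a b ↔ keyOrder ({x | P' ck x}.indicator 1) Pi a b :=
  hmu.iff_keyOrder_indicator hPi hPiQ (fun _ _ hx hxy => hmu.isPref.trans hx hxy) hmu.rel_ck_cj
    (hmu.isPref.irrefl ck) a b

theorem iff_keyOrder_cut_cj (hPi : IsPref Pi) (hPiQ : Extends Pi Q)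
    (hmu : InMu Q cj ck Pi P') (a b : C) :
    P' a b ↔ keyOrder ({x | x = cj ∨ P' cj x}.indicator 1) Pi a b := by
  refine hmu.iff_keyOrder_indicator hPi hPiQ (L := {x | x = cj ∨ P' cj x})
    (fun x y hx hxy => Or.inr ?_) (Or.inl rfl) ?_ a b
  · rcases hx with rfl | hx
    exacts [hxy, hmu.isPref.trans hx hxy]
  · rintro (h | h)
    exacts [hmu.isPref.ne hmu.rel_ck_cj h, hmu.isPref.asymm hmu.rel_ck_cj h]

theorem rel_ck_of_rel (hPi : IsPref Pi) (hPiQ : Extends Pi Q) (hmu : InMu Q cj ck Pi P')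
    {d : C} (hkd : Pi ck d) : P' ck d := by
  by_contra h
  have hdk := (hmu.isPref.total (hPi.ne hkd).symm).resolve_right h
  exact hPi.asymm hkd (rel_of_keyOrder_indicator ((hmu.iff_keyOrder_cut_ck hPi hPiQ d ck).1 hdk)
    (iff_of_false h (hmu.isPref.irrefl ck)))

theorem not_rel_ck_of_rel (hPi : IsPref Pi) (hPiQ : Extends Pi Q) (hjk : Pi cj ck)
    (hmu : InMu Q cj ck Pi P') {d : C} (hdj : Pi d cj) : ¬ P' ck d := by
  intro hkd
  by_cases hjd : P' cj d
  · exact hPi.asymm hdj (rel_of_keyOrder_indicator ((hmu.iff_keyOrder_cut_ck hPi hPiQ cj d).1 hjd)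
      (iff_of_true hmu.rel_ck_cj hkd))
  · have hck : ck ∉ {x | x = cj ∨ P' cj x} := by
      rintro (h | h)
      exacts [hPi.ne hjk h.symm, hmu.isPref.asymm hmu.rel_ck_cj h]
    have hd : d ∉ {x | x = cj ∨ P' cj x} := by
      rintro (h | h)
      exacts [hPi.ne hdj h, hjd h]
    have hkd' := rel_of_keyOrder_indicator ((hmu.iff_keyOrder_cut_cj hPi hPiQ ck d).1 hkd)
      (iff_of_false hck hd)
    exact hPi.asymm hjk (hPi.trans hkd' hdj)

theorem rel_ck_swap_of_rel [DecidableEq C] (hQ : IsSPO Q) (hPi : IsPref Pi)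
    (hPiQ : Extends Pi Q) (hjk : Pi cj ck) (hmu : InMu Q cj ck Pi P') {d₁ d₂ : C}
    (hd₁ : d₁ ∈ freeBetween Q Pi cj ck) (hd₁L : P' ck d₁)
    (hmax : ∀ x ∈ freeBetween Q Pi cj ck, P' ck x → ¬ Pi x d₁)
    (hd₂ : d₂ ∈ freeBetween Q Pi cj ck) (hd₂U : P' d₂ ck)
    (hmin : ∀ x ∈ freeBetween Q Pi cj ck, P' x ck → ¬ Pi d₂ x) (h₁₂ : Pi d₁ d₂)
    {a b : C} (hab : Q a b) :
    P' ck (Equiv.swap d₁ d₂ a) → P' ck (Equiv.swap d₁ d₂ b) := by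
  have hP' := hmu.isPref
  have hPiab := hPiQ a b hab
  rcases eq_or_ne a d₁ with rfl | ha₁
  · rw [Equiv.swap_apply_left]
    exact fun h => absurd h (hP'.asymm hd₂U)
  rcases eq_or_ne a d₂ with ha | ha₂
  · subst a
    have hb₁ : b ≠ d₁ := by rintro rfl; exact hPi.asymm h₁₂ hPiab
    have hb₂ : b ≠ d₂ := hPi.ne hPiab |>.symm
    rw [Equiv.swap_apply_right, Equiv.swap_apply_of_ne_of_ne hb₁ hb₂]
    intro _
    by_contra hb
    have hbk : b ≠ ck := by rintro rfl; exact hd₂.2.2.2 hab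
    have hbU : P' b ck := (hP'.total hbk).resolve_right hb
    refine hmin b ⟨hPi.trans hd₂.1 hPiab, ?_, fun h => hb ?_, fun h => hd₂.2.2.2 ?_⟩ hbU hPiab
    · exact (hPi.total hbk).resolve_right fun h => hb (hmu.rel_ck_of_rel hPi hPiQ h)
    · exact hP'.trans hmu.rel_ck_cj (hmu.rel_of_rel h)
    · exact hQ.2 _ _ _ hab h
  rw [Equiv.swap_apply_of_ne_of_ne ha₁ ha₂]
  intro ha
  rcases eq_or_ne b d₁ with rfl | hb₁
  · have haj : a ≠ cj := by rintro rfl; exact hd₁.2.2.1 hab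
    refine absurd hPiab (hmax a ⟨?_, hPi.trans hPiab hd₁.2.1,
      fun h => hd₁.2.2.1 (hQ.2 _ _ _ h hab), fun h => hP'.asymm ha (hmu.rel_of_rel h)⟩ ha)
    exact (hPi.total haj.symm).resolve_right fun h => hmu.not_rel_ck_of_rel hPi hPiQ hjk h ha
  rcases eq_or_ne b d₂ with rfl | hb₂
  · rwa [Equiv.swap_apply_right]
  · rw [Equiv.swap_apply_of_ne_of_ne hb₁ hb₂]
    exact hP'.trans ha (hmu.rel_of_rel hab)

theorem feasible_keyOrder_swap [DecidableEq C] (hQ : IsSPO Q) (hPi : IsPref Pi)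
    (hPiQ : Extends Pi Q) (hjk : Pi cj ck) (hmu : InMu Q cj ck Pi P') {d₁ d₂ : C}
    (hd₁ : d₁ ∈ freeBetween Q Pi cj ck) (hd₁L : P' ck d₁)
    (hmax : ∀ x ∈ freeBetween Q Pi cj ck, P' ck x → ¬ Pi x d₁)
    (hd₂ : d₂ ∈ freeBetween Q Pi cj ck) (hd₂U : P' d₂ ck)
    (hmin : ∀ x ∈ freeBetween Q Pi cj ck, P' x ck → ¬ Pi d₂ x) (h₁₂ : Pi d₁ d₂) :
    Feasible Q cj ck (keyOrder ({x | P' ck x}.indicator 1 ∘ Equiv.swap d₁ d₂) Pi) := by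
  refine ⟨hPi.keyOrder _, hPiQ.keyOrder fun a b hab => indicator_one_le_of_imp
    (hmu.rel_ck_swap_of_rel hQ hPi hPiQ hjk hd₁ hd₁L hmax hd₂ hd₂U hmin h₁₂ hab), Or.inl ?_⟩
  have hk₁ : ck ≠ d₁ := (hPi.ne hd₁.2.1).symm
  have hk₂ : ck ≠ d₂ := (hPi.ne hd₂.2.1).symm
  have hj₁ : cj ≠ d₁ := hPi.ne hd₁.1
  have hj₂ : cj ≠ d₂ := hPi.ne hd₂.1
  rw [Function.comp_apply, Function.comp_apply, Equiv.swap_apply_of_ne_of_ne hk₁ hk₂,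
    Equiv.swap_apply_of_ne_of_ne hj₁ hj₂,
    Set.indicator_of_notMem (s := {x | P' ck x}) (hmu.isPref.irrefl ck),
    Set.indicator_of_mem (s := {x | P' ck x}) hmu.rel_ck_cj]
  exact Nat.zero_lt_one

theorem not_rel_of_extremal (hQ : IsSPO Q) (hPi : IsPref Pi) (hPiQ : Extends Pi Q)
    (hjk : Pi cj ck) (hmu : InMu Q cj ck Pi P') {d₁ d₂ : C}
    (hd₁ : d₁ ∈ freeBetween Q Pi cj ck) (hd₁L : P' ck d₁)
    (hmax : ∀ x ∈ freeBetween Q Pi cj ck, P' ck x → ¬ Pi x d₁)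
    (hd₂ : d₂ ∈ freeBetween Q Pi cj ck) (hd₂U : P' d₂ ck)
    (hmin : ∀ x ∈ freeBetween Q Pi cj ck, P' x ck → ¬ Pi d₂ x) : ¬ Pi d₁ d₂ := by
  classical
  intro h₁₂
  set σ : C → ℕ := {x | P' ck x}.indicator 1
  have hP' : P' = keyOrder σ Pi := funext₂ fun a b => propext (hmu.iff_keyOrder_cut_ck hPi hPiQ a b)
  have hσ₁ : σ d₁ = 1 := Set.indicator_of_mem hd₁L _
  have hσ₂ : σ d₂ = 0 := Set.indicator_of_notMem (hmu.isPref.asymm hd₂U) _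
  have hlt := dswap_keyOrder_comp_swap_lt hPi h₁₂ (by omega) (fun x => hσ₂ ▸ Nat.zero_le _)
    (fun x => hσ₁ ▸ Set.indicator_le_self _ _ x)
  have hle : dswap Pi P' ≤ dswap Pi (keyOrder (σ ∘ Equiv.swap d₁ d₂) Pi) :=
    hmu.dswap_le (hmu.feasible_keyOrder_swap hQ hPi hPiQ hjk hd₁ hd₁L hmax hd₂ hd₂U hmin h₁₂)
  rw [← hP'] at hlt
  omega

theorem exists_pivot (hQ : IsSPO Q) (hPi : IsPref Pi) (hPiQ : Extends Pi Q) (hjk : Pi cj ck)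
    (hmu : InMu Q cj ck Pi P') :
    ∃ z ∈ seg Pi cj ck, ∀ d ∈ freeBetween Q Pi cj ck, ¬ P' ck d ↔ Pi d z := by
  obtain ⟨z, hzT, hzmax⟩ := hPi.wellFounded.has_min
    {x | x = ck ∨ (x ∈ freeBetween Q Pi cj ck ∧ P' ck x)} ⟨ck, Or.inl rfl⟩
  refine ⟨z, ?_, fun d hd => ⟨fun hdU => ?_, fun hdz hdL => hzmax d (Or.inr ⟨hd, hdL⟩) hdz⟩⟩
  · rcases hzT with rfl | ⟨hz, -⟩
    exacts [⟨Or.inr hjk, Or.inl rfl⟩, ⟨Or.inr hz.1, Or.inr hz.2.1⟩]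
  rcases hzT with rfl | ⟨hz, hzL⟩
  · exact hd.2.1
  have hdk : P' d ck := (hmu.isPref.total (hPi.ne hd.2.1)).resolve_right hdU
  by_contra hdz
  have hzd : Pi z d := (hPi.eq_or_rel_of_not_rel hdz).resolve_left fun h => hdU (h ▸ hzL)
  obtain ⟨d₂, ⟨hd₂, hd₂U⟩, hmin⟩ := hPi.swap.wellFounded.has_min
    {x | x ∈ freeBetween Q Pi cj ck ∧ P' x ck} ⟨d, hd, hdk⟩
  have hzd₂ : Pi z d₂ := by
    rcases hPi.eq_or_rel_of_not_rel (hmin d ⟨hd, hdk⟩) with rfl | hdd₂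
    exacts [hzd, hPi.trans hzd hdd₂]
  exact hmu.not_rel_of_extremal hQ hPi hPiQ hjk hz hzL (fun x hx hxL => hzmax x (Or.inr ⟨hx, hxL⟩))
    hd₂ hd₂U (fun x hx hxU => hmin x ⟨hx, hxU⟩) hzd₂

theorem setOf_rel_ck_eq (hPi : IsPref Pi) (hPiQ : Extends Pi Q) (hjk : Pi cj ck)
    (hmu : InMu Q cj ck Pi P') {z : C} (hz : z ∈ seg Pi cj ck)
    (hfree : ∀ d ∈ freeBetween Q Pi cj ck, ¬ P' ck d ↔ Pi d z) :
    {d | P' ck d} = {d | 2 < blk Q Pi cj ck z d} := by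
  ext d
  simpa using (mem_iff_blk_le_two (U := {d | ¬ P' ck d}) hPi hPiQ hz (hmu.isPref.irrefl ck)
    (not_not.2 hmu.rel_ck_cj) (fun _ => hmu.not_rel_ck_of_rel hPi hPiQ hjk)
    (fun _ hkd => not_not.2 (hmu.rel_ck_of_rel hPi hPiQ hkd))
    (fun _ hdk => hmu.isPref.asymm (hmu.rel_of_rel hdk))
    (fun _ hjd => not_not.2 (hmu.isPref.trans hmu.rel_ck_cj (hmu.rel_of_rel hjd))) hfree d).not

end InMu

theorem statement12_general {C : Type*} [Fintype C]
    (Q : C → C → Prop) (hQ : IsSPO Q)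
    (Pi : C → C → Prop) (hPi : IsPref Pi) (hPiQ : Extends Pi Q)
    (cj ck : C) (hjk : Pi cj ck)
    (P' : C → C → Prop) (hmu : InMu Q cj ck Pi P') :
    ∃ z : C, z ∈ seg Pi cj ck ∧
      ∀ a b : C, P' a b ↔
        (blk Q Pi cj ck z a < blk Q Pi cj ck z b ∨
          (blk Q Pi cj ck z a = blk Q Pi cj ck z b ∧ Pi a b)) := by
  obtain ⟨z, hz, hfree⟩ := hmu.exists_pivot hQ hPi hPiQ hjk
  refine ⟨z, hz, fun a b => ?_⟩
  rw [hmu.iff_keyOrder_cut_ck hPi hPiQ, hmu.setOf_rel_ck_eq hPi hPiQ hjk hz hfree]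
  exact (hPi.keyOrder _).iff_of_imp (hPi.keyOrder _)
    (fun _ _ => keyOrder_indicator_of_keyOrder_blk hPi hPiQ hz) a b

theorem statement12 {C : Type*} [Fintype C]
    (Q : C → C → Prop) (hQ : IsSPO Q)
    (Pi : C → C → Prop) (hPi : IsPref Pi) (hPiQ : Extends Pi Q)
    (cj ck : C) (hjk : Pi cj ck) (hQjk : ¬ Q cj ck) (hQkj : ¬ Q ck cj)
    (P' : C → C → Prop) (hmu : InMu Q cj ck Pi P') :
    ∃ z : C, z ∈ seg Pi cj ck ∧
      ∀ a b : C, P' a b ↔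
        (blk Q Pi cj ck z a < blk Q Pi cj ck z b ∨
          (blk Q Pi cj ck z a = blk Q Pi cj ck z b ∧ Pi a b)) :=
  statement12_general Q hQ Pi hPi hPiQ cj ck hjk P' hmu
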